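/- arXiv:chao-dyn/9802014 — 5 statements merged into one kernel-verified Lean document; each statement's English description precedes it below -/
import Mathlib

section
/- The inequality γ < 2·√(1 − γ·(γ + √(γ²+4))/2) holds for a positive real γ if and only if γ² < 4(1 − 2/√5); equivalently, the critical value γ∞ satisfying γ∞ = 2α∞ is γ∞ = 2√(1 − 2/√5). -/
/-!
For `γ ≥ 0`, `γ < 2α∞(γ)` says exactly that `γ² + 4γβ∞(γ) < 4`, and the left side is strictly
increasing in `γ` because `γ` and `β∞(γ)` are. At `γ∞ = 2√(1 - 2/√5)` one computes
`γ∞β∞(γ∞) = 2/√5`, so there the left side equals `4(1 - 2/√5) + 8/√5 = 4`. Hence the inequality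
holds exactly for `γ < γ∞`, and `γ∞ = 2α∞(γ∞)`.
-/

open Real Set

lemma lt_two_mul_sqrt_iff {γ x : ℝ} (hγ : 0 ≤ γ) : γ < 2 * √x ↔ γ ^ 2 < 4 * x := by
  rw [← div_lt_iff₀' two_pos, lt_sqrt (by positivity)]
  constructor <;> intro h <;> linarith

noncomputable def betaInf (γ : ℝ) : ℝ := (γ + √(γ ^ 2 + 4)) / 2

noncomputable def alphaInf (γ : ℝ) : ℝ := √(1 - γ * betaInf γ)

lemma betaInf_pos (γ : ℝ) : 0 < betaInf γ := by
  have h : |γ| < √(γ ^ 2 + 4) := by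
    rw [← sqrt_sq_eq_abs]
    exact sqrt_lt_sqrt (sq_nonneg γ) (by linarith)
  unfold betaInf
  linarith [neg_abs_le γ]

lemma monotoneOn_betaInf : MonotoneOn betaInf (Ici 0) := by
  intro a ha b _ hab
  have : √(a ^ 2 + 4) ≤ √(b ^ 2 + 4) := by gcongr
  unfold betaInf
  linarith

lemma strictMonoOn_mul_betaInf : StrictMonoOn (fun γ ↦ γ * betaInf γ) (Ici 0) := by
  intro a ha b hb hab
  have hβ : betaInf a ≤ betaInf b := monotoneOn_betaInf ha hb hab.le
  calc a * betaInf a ≤ a * betaInf b := mul_le_mul_of_nonneg_left hβ ha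
    _ < b * betaInf b := mul_lt_mul_of_pos_right hab (betaInf_pos b)

lemma strictMonoOn_sq_add_four_mul_mul_betaInf :
    StrictMonoOn (fun γ ↦ γ ^ 2 + 4 * (γ * betaInf γ)) (Ici 0) := by
  intro a ha b hb hab
  have := strictMonoOn_mul_betaInf ha hb hab
  have := pow_lt_pow_left₀ hab ha two_ne_zero
  dsimp only
  linarith

lemma lt_two_mul_alphaInf_iff {γ : ℝ} (hγ : 0 ≤ γ) :
    γ < 2 * alphaInf γ ↔ γ ^ 2 + 4 * (γ * betaInf γ) < 4 := by
  rw [alphaInf, lt_two_mul_sqrt_iff hγ]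
  constructor <;> intro h <;> linarith

noncomputable def gammaInf : ℝ := 2 * √(1 - 2 / √5)

lemma gammaInf_nonneg : 0 ≤ gammaInf := by
  unfold gammaInf
  positivity

lemma gammaInf_sq : gammaInf ^ 2 = 4 * (1 - 2 / √5) := by
  have : 2 / √5 ≤ 1 := by
    rw [div_le_one (by positivity), show (2 : ℝ) = √4 by norm_num]
    gcongr
    norm_num
  rw [gammaInf, mul_pow, sq_sqrt (by linarith)]
  norm_num

lemma gammaInf_mul_betaInf : gammaInf * betaInf gammaInf = 2 / √5 := by
  set c := 1 - 2 / √5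
  have h5 : √5 ^ 2 = 5 := sq_sqrt (by norm_num)
  have h5pos : 0 < √5 := by positivity
  have hc : 0 ≤ c := by linarith [gammaInf_sq, sq_nonneg gammaInf]
  have hprod : √c * √(c + 1) = 3 / √5 - 1 := by
    have hnonneg : 0 ≤ 3 / √5 - 1 := by
      rw [sub_nonneg, le_div_iff₀ h5pos, one_mul, show (3 : ℝ) = √9 by norm_num]
      gcongr
      norm_num
    rw [← sqrt_mul hc, ← sqrt_sq hnonneg]
    congr 1
    have hinv : √5 * (√5)⁻¹ = 1 := mul_inv_cancel₀ h5pos.ne'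
    linear_combination (-(√5 * (√5)⁻¹ + 1)) * hinv + (√5)⁻¹ ^ 2 * h5
  have hs : √(gammaInf ^ 2 + 4) = 2 * √(c + 1) := by
    rw [gammaInf_sq, show 4 * c + 4 = 2 ^ 2 * (c + 1) by ring, sqrt_mul (by norm_num),
      sqrt_sq (by norm_num)]
  rw [betaInf, hs, gammaInf]
  linear_combination (2 : ℝ) * hprod + 2 * sq_sqrt hc

lemma gammaInf_sq_add_four_mul_mul_betaInf :
    gammaInf ^ 2 + 4 * (gammaInf * betaInf gammaInf) = 4 := by
  rw [gammaInf_sq, gammaInf_mul_betaInf]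
  ring

lemma gammaInf_eq_two_mul_alphaInf : gammaInf = 2 * alphaInf gammaInf := by
  rw [alphaInf, gammaInf_mul_betaInf, gammaInf]

/-- For `γ > 0`, the inequality `γ < 2√(1 − γ(γ + √(γ²+4))/2)` holds iff
`γ² < 4(1 − 2/√5)`; hence the critical value `γ∞` with `γ∞ = 2α∞(γ∞)` is
`γ∞ = 2√(1 − 2/√5)`. -/
theorem contraction_bound_iff (γ : ℝ) (hγ : 0 < γ) :
    (γ < 2 * Real.sqrt (1 - γ * ((γ + Real.sqrt (γ ^ 2 + 4)) / 2)) ↔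
      γ ^ 2 < 4 * (1 - 2 / Real.sqrt 5)) ∧
    (2 * Real.sqrt (1 - 2 / Real.sqrt 5)) =
      2 * Real.sqrt (1 - (2 * Real.sqrt (1 - 2 / Real.sqrt 5)) *
        ((2 * Real.sqrt (1 - 2 / Real.sqrt 5) +
          Real.sqrt ((2 * Real.sqrt (1 - 2 / Real.sqrt 5)) ^ 2 + 4)) / 2)) := by
  refine ⟨?_, gammaInf_eq_two_mul_alphaInf⟩
  change γ < 2 * alphaInf γ ↔ _
  calc γ < 2 * alphaInf γ ↔ γ ^ 2 + 4 * (γ * betaInf γ) < 4 := lt_two_mul_alphaInf_iff hγ.le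
    _ ↔ γ < gammaInf := by
      rw [← strictMonoOn_sq_add_four_mul_mul_betaInf.lt_iff_lt hγ.le gammaInf_nonneg,
        gammaInf_sq_add_four_mul_mul_betaInf]
    _ ↔ γ ^ 2 < 4 * (1 - 2 / √5) := by
      rw [← gammaInf_sq]
      exact (sq_lt_sq₀ hγ.le gammaInf_nonneg).symm
end

section
/- For every symbol sequence s : ℤ → {−1,1} and real parameters ε, b with |ε|(1+|b|) < 2√(1 − 2/√5), there exists a unique bounded sequence z : ℤ → ℝ with ‖z − s‖∞ ≤ M∞ := 1 − √(1 − γ(γ+√(γ²+4))/2) (where γ = |ε|(1+|b|)) satisfying the Hénon difference equation −ε(z_{t+1} + b z_{t−1}) + z_t² − 1 = 0 for all t ∈ ℤ, and moreover sign(z_t) = s_t for all t. -/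
/-!
With `s_t = ±1` fixed, a solution whose signs are `s` is a fixed point of
`T(z)_t = s_t √(1 + ε (z_{t+1} + b z_{t-1}))` on bounded sequences. Where all radicands are at
least `c² > 0`, `T` is Lipschitz with constant `γ / (2c)`, since `√` has slope at most `1/(2c)`
on `[c², ∞)`. Let `β` be the positive root of `β² = 1 + γβ` and `c = √(1 - γβ) = 1 - M∞`.
Then `T` maps the tube `{z | c ≤ s_t z_t ≤ β}` (which lies in the `M∞`-ball around `s`) into
itself, and the hypothesis on `γ` amounts to `5 (γβ)² < 4`, i.e. to `γ < 2c`, so Banach's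
theorem gives a solution. Conversely, every solution in the `M∞`-ball has signs `s` and
radicands `z_t² ≥ c²`, so it is a fixed point of `T` and the same estimate gives uniqueness.
-/

open Set BoundedContinuousFunction

theorem Real.abs_sqrt_sub_sqrt_le {a a' c : ℝ} (hc : 0 < c) (ha : c ^ 2 ≤ a) (ha' : c ^ 2 ≤ a') :
    |√a - √a'| ≤ |a - a'| / (2 * c) := by
  have hca : c ≤ √a := Real.le_sqrt_of_sq_le ha
  have hca' : c ≤ √a' := Real.le_sqrt_of_sq_le ha'
  have hprod : (√a + √a') * (√a - √a') = a - a' := by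
    rw [← sq_sub_sq, Real.sq_sqrt (by nlinarith), Real.sq_sqrt (by nlinarith)]
  rw [le_div_iff₀ (by positivity), ← hprod, abs_mul, abs_of_pos (by linarith : 0 < √a + √a'),
    mul_comm]
  gcongr
  linarith

theorem Real.sign_eq_of_pos_mul {s x : ℝ} (hs : s = 1 ∨ s = -1) (h : 0 < s * x) :
    Real.sign x = s := by
  rcases hs with rfl | rfl
  · exact Real.sign_of_pos (by linarith)
  · exact Real.sign_of_neg (by linarith)

theorem abs_sub_le_one_sub_iff_mul_mem_Icc {s x c : ℝ} (hs : s = 1 ∨ s = -1) :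
    |x - s| ≤ 1 - c ↔ s * x ∈ Icc c (2 - c) := by
  rcases hs with rfl | rfl <;> simp only [abs_le, mem_Icc] <;> constructor <;>
    rintro ⟨h₁, h₂⟩ <;> constructor <;> linarith

namespace Henon

variable (ε b : ℝ)

def radicand (z : ℤ → ℝ) (t : ℤ) : ℝ := 1 + ε * (z (t + 1) + b * z (t - 1))

def IsOrbit (z : ℤ → ℝ) : Prop := ∀ t, -ε * (z (t + 1) + b * z (t - 1)) + z t ^ 2 - 1 = 0

variable {ε b}

theorem isOrbit_iff {z : ℤ → ℝ} : IsOrbit ε b z ↔ ∀ t, z t ^ 2 = radicand ε b z t :=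
  forall_congr' fun t => by unfold radicand; constructor <;> intro h <;> linarith

theorem abs_mul_add_mul_le {u v C : ℝ} (hu : |u| ≤ C) (hv : |v| ≤ C) :
    |ε * (u + b * v)| ≤ |ε| * (1 + |b|) * C := by
  rw [abs_mul, mul_assoc]
  gcongr
  calc |u + b * v| ≤ |u| + |b| * |v| := (abs_add_le _ _).trans_eq (by rw [abs_mul])
    _ ≤ C + |b| * C := by gcongr
    _ = (1 + |b|) * C := by ring

theorem abs_radicand_sub_one_le {z : ℤ → ℝ} {C : ℝ} (hz : ∀ t, |z t| ≤ C) (t : ℤ) :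
    |radicand ε b z t - 1| ≤ |ε| * (1 + |b|) * C := by
  simpa [radicand] using abs_mul_add_mul_le (hz (t + 1)) (hz (t - 1))

theorem radicand_sub_radicand (z w : ℤ → ℝ) (t : ℤ) :
    radicand ε b z t - radicand ε b w t = radicand ε b (z - w) t - 1 := by
  simp only [radicand, Pi.sub_apply]
  ring

variable (ε b) in
noncomputable def rootMap (s z : ℤ →ᵇ ℝ) : ℤ →ᵇ ℝ :=
  ofNormedAddCommGroupDiscrete (fun t => s t * √(radicand ε b z t))
    (‖s‖ * √(1 + |ε| * (1 + |b|) * ‖z‖)) fun t => by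
      rw [Real.norm_eq_abs, abs_mul, abs_of_nonneg (Real.sqrt_nonneg _)]
      have hrad := abs_radicand_sub_one_le (ε := ε) (b := b) (fun t => z.norm_coe_le_norm t) t
      gcongr
      · exact s.norm_coe_le_norm t
      · linarith [le_abs_self (radicand ε b z t - 1)]

theorem rootMap_apply (s z : ℤ →ᵇ ℝ) (t : ℤ) :
    rootMap ε b s z t = s t * √(radicand ε b z t) :=
  rfl

theorem dist_rootMap_le {s : ℤ →ᵇ ℝ} (hs : ∀ t, |s t| ≤ 1) {c : ℝ} (hc : 0 < c)
    {z w : ℤ →ᵇ ℝ} (hz : ∀ t, c ^ 2 ≤ radicand ε b z t) (hw : ∀ t, c ^ 2 ≤ radicand ε b w t) :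
    dist (rootMap ε b s z) (rootMap ε b s w) ≤ |ε| * (1 + |b|) / (2 * c) * dist z w := by
  refine (dist_le (by positivity)).2 fun t => ?_
  have hzw : ∀ t, |(⇑z - ⇑w) t| ≤ dist z w := fun t => by
    simpa [Real.dist_eq] using dist_coe_le_dist (f := z) (g := w) t
  calc dist (rootMap ε b s z t) (rootMap ε b s w t)
      = |s t| * |√(radicand ε b z t) - √(radicand ε b w t)| := by
        rw [Real.dist_eq, rootMap_apply, rootMap_apply, ← mul_sub, abs_mul]
    _ ≤ 1 * (|radicand ε b z t - radicand ε b w t| / (2 * c)) := by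
        gcongr
        exacts [hs t, Real.abs_sqrt_sub_sqrt_le hc (hz t) (hw t)]
    _ ≤ 1 * (|ε| * (1 + |b|) * dist z w / (2 * c)) := by
        rw [radicand_sub_radicand]
        gcongr
        exact abs_radicand_sub_one_le hzw t
    _ = |ε| * (1 + |b|) / (2 * c) * dist z w := by ring

section Signs

variable {s : ℤ →ᵇ ℝ} (hs : ∀ t, s t = 1 ∨ s t = -1)
include hs

theorem rootMap_eq_self_of_isOrbit {z : ℤ →ᵇ ℝ} (hz : IsOrbit ε b z)
    (hsz : ∀ t, 0 ≤ s t * z t) : rootMap ε b s z = z := by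
  ext t
  rw [rootMap_apply, ← isOrbit_iff.1 hz t, Real.sqrt_sq_eq_abs]
  calc s t * |z t| = s t * |s t * z t| := by
        rw [abs_mul, (abs_eq zero_le_one).2 (hs t), one_mul]
    _ = s t * s t * z t := by rw [abs_of_nonneg (hsz t), mul_assoc]
    _ = z t := by rw [mul_self_eq_one_iff.2 (hs t), one_mul]

theorem isOrbit_of_rootMap_eq_self {z : ℤ →ᵇ ℝ} (hrad : ∀ t, 0 ≤ radicand ε b z t)
    (hz : rootMap ε b s z = z) : IsOrbit ε b z :=
  isOrbit_iff.2 fun t => by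
    rw [← DFunLike.congr_fun hz t, rootMap_apply, mul_pow, Real.sq_sqrt (hrad t), sq,
      mul_self_eq_one_iff.2 (hs t), one_mul]

end Signs

def tube (s : ℤ → ℝ) (c β : ℝ) : Set (ℤ →ᵇ ℝ) := {z | ∀ t, s t * z t ∈ Icc c β}

theorem isClosed_tube (s : ℤ → ℝ) (c β : ℝ) : IsClosed (tube s c β) := by
  simp only [tube, ofPred_forall]
  exact isClosed_iInter fun t =>
    isClosed_Icc.preimage (continuous_const.mul (continuous_eval_const t))

section Tube

variable {s : ℤ →ᵇ ℝ} (hs : ∀ t, s t = 1 ∨ s t = -1) {c β : ℝ}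
include hs

theorem abs_le_of_mem_tube (hc : 0 ≤ c) {z : ℤ →ᵇ ℝ} (hz : z ∈ tube s c β) (t : ℤ) :
    |z t| ≤ β := by
  rw [← one_mul |z t|, ← (abs_eq zero_le_one).2 (hs t), ← abs_mul,
    abs_of_nonneg (hc.trans (hz t).1)]
  exact (hz t).2

variable (hc : 0 ≤ c) (hcβ : c ^ 2 ≤ 1 - |ε| * (1 + |b|) * β)
  (hβ : 1 + |ε| * (1 + |b|) * β ≤ β ^ 2)
include hc hcβ hβ

theorem radicand_mem_Icc_of_mem_tube {z : ℤ →ᵇ ℝ} (hz : z ∈ tube s c β) (t : ℤ) :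
    radicand ε b z t ∈ Icc (c ^ 2) (β ^ 2) := by
  have := abs_le.1 (abs_radicand_sub_one_le (ε := ε) (b := b) (abs_le_of_mem_tube hs hc hz) t)
  constructor <;> linarith

theorem mapsTo_rootMap_tube (hβ0 : 0 ≤ β) :
    MapsTo (rootMap ε b s) (tube s c β) (tube s c β) := by
  intro z hz t
  obtain ⟨hlo, hhi⟩ := radicand_mem_Icc_of_mem_tube hs hc hcβ hβ hz t
  rw [rootMap_apply, ← mul_assoc, mul_self_eq_one_iff.2 (hs t), one_mul]
  exact ⟨Real.le_sqrt_of_sq_le hlo, (Real.sqrt_le_left hβ0).2 hhi⟩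

end Tube

theorem exists_isOrbit_mem_tube {s : ℤ →ᵇ ℝ} (hs : ∀ t, s t = 1 ∨ s t = -1) {c β : ℝ}
    (hc : 0 < c) (hβ0 : 0 ≤ β) (hcβ : c ^ 2 ≤ 1 - |ε| * (1 + |b|) * β)
    (hβ : 1 + |ε| * (1 + |b|) * β ≤ β ^ 2) (hγc : |ε| * (1 + |b|) < 2 * c) :
    ∃ z ∈ tube s c β, IsOrbit ε b z := by
  have hmaps := mapsTo_rootMap_tube hs hc.le hcβ hβ hβ0
  have hrad := fun z (hz : z ∈ tube s c β) => radicand_mem_Icc_of_mem_tube hs hc.le hcβ hβ hz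
  have hlip : LipschitzOnWith (⟨|ε| * (1 + |b|) / (2 * c), by positivity⟩ : NNReal)
      (rootMap ε b s) (tube s c β) :=
    LipschitzOnWith.of_dist_le_mul fun z hz w hw =>
      dist_rootMap_le (fun t => ((abs_eq zero_le_one).2 (hs t)).le) hc
        (fun t => (hrad z hz t).1) (fun t => (hrad w hw t).1)
  have hcontr : ContractingWith _ (hmaps.restrict (rootMap ε b s) _ _) :=
    ⟨show |ε| * (1 + |b|) / (2 * c) < 1 from (div_lt_one (by positivity)).2 hγc,
      hlip.mapsToRestrict hmaps⟩
  have hγβ : 0 ≤ |ε| * (1 + |b|) * β := by positivity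
  have hs_mem : s ∈ tube s c β := fun t => by
    rw [mul_self_eq_one_iff.2 (hs t)]
    constructor <;> nlinarith
  obtain ⟨z, hz, hfix, -⟩ := hcontr.exists_fixedPoint' (isClosed_tube _ c β).isComplete hmaps
    hs_mem (edist_ne_top _ _)
  exact ⟨z, hz, isOrbit_of_rootMap_eq_self hs
    (fun t => (sq_nonneg c).trans (hrad z hz t).1) hfix⟩

theorem eq_of_isOrbit {s : ℤ →ᵇ ℝ} (hs : ∀ t, s t = 1 ∨ s t = -1) {c : ℝ} (hc : 0 < c)
    (hγc : |ε| * (1 + |b|) < 2 * c) {z w : ℤ →ᵇ ℝ} (hz : IsOrbit ε b z) (hw : IsOrbit ε b w)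
    (hzc : ∀ t, c ≤ s t * z t) (hwc : ∀ t, c ≤ s t * w t) : z = w := by
  have hrad : ∀ u : ℤ →ᵇ ℝ, IsOrbit ε b u → (∀ t, c ≤ s t * u t) →
      ∀ t, c ^ 2 ≤ radicand ε b u t := fun u hu huc t => by
    have hsu : |s t * u t| = |u t| := by rw [abs_mul, (abs_eq zero_le_one).2 (hs t), one_mul]
    rw [← isOrbit_iff.1 hu t, ← sq_abs (u t), ← hsu]
    exact pow_le_pow_left₀ hc.le ((huc t).trans (le_abs_self _)) 2
  have hdist := dist_rootMap_le (fun t => ((abs_eq zero_le_one).2 (hs t)).le) hc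
    (hrad z hz hzc) (hrad w hw hwc)
  rw [rootMap_eq_self_of_isOrbit hs hz fun t => hc.le.trans (hzc t),
    rootMap_eq_self_of_isOrbit hs hw fun t => hc.le.trans (hwc t)] at hdist
  have hL : |ε| * (1 + |b|) / (2 * c) < 1 := (div_lt_one (by positivity)).2 hγc
  exact dist_le_zero.1 (by nlinarith [dist_nonneg (x := z) (y := w)])

section Parameters

variable {γ β : ℝ} (hβ0 : 0 ≤ β) (hβ : β ^ 2 = 1 + γ * β)
include hβ0 hβ

theorem five_mul_sq_lt_four (hγ0 : 0 ≤ γ) (hγ : γ < 2 * √(1 - 2 / √5)) :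
    5 * (γ * β) ^ 2 < 4 := by
  set r := √5
  have hr : r ^ 2 = 5 := Real.sq_sqrt (by norm_num)
  have hr2 : 2 < r := by nlinarith [Real.sqrt_nonneg 5]
  have hq : √(1 - 2 / r) ^ 2 * r = r - 2 := by
    rw [Real.sq_sqrt (by rw [sub_nonneg, div_le_one (by positivity)]; linarith)]
    field_simp
  have hγr : r * γ ^ 2 < 4 * r - 8 := by nlinarith [Real.sqrt_nonneg (1 - 2 / r)]
  set p := γ * β
  have hp0 : 0 ≤ p := by positivity
  have hp : p ^ 2 = γ ^ 2 * (1 + p) := by rw [← hβ]; ring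
  -- `(r p - 2) (p + 2 r - 4) = r p² - (4 r - 8)(1 + p) < 0` and the second factor is positive
  have hrp : r * p < 2 := by nlinarith
  nlinarith

theorem lt_two_mul_sqrt_one_sub (hγ0 : 0 ≤ γ) (h : 5 * (γ * β) ^ 2 < 4) :
    γ < 2 * √(1 - γ * β) := by
  have hp0 : 0 ≤ γ * β := by positivity
  have hp : (γ * β) ^ 2 = γ ^ 2 * (1 + γ * β) := by rw [← hβ]; ring
  have : γ / 2 < √(1 - γ * β) := (Real.lt_sqrt (by positivity)).2 (by nlinarith)
  linarith

theorem le_two_sub_sqrt_one_sub (h : γ * β ≤ 1) : β ≤ 2 - √(1 - γ * β) := by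
  have hβ2 : β ≤ 2 := by nlinarith
  have : √(1 - γ * β) ≤ 2 - β :=
    (Real.sqrt_le_left (by linarith)).2 (by nlinarith [sq_nonneg (β - 1)])
  linarith

end Parameters

end Henon

/-- For every symbol sequence `s : ℤ → {±1}` and parameters with
`γ = |ε|(1+|b|) < 2√(1 − 2/√5)`, there is a unique sequence `z` with
`‖z − s‖∞ ≤ M∞ = 1 − √(1 − γ(γ+√(γ²+4))/2)` satisfying the Hénon difference
equation `−ε(z_{t+1} + b z_{t−1}) + z_t² − 1 = 0` for all `t`; moreover any such
`z` satisfies `sign(z_t) = s_t` for all `t`. -/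
theorem henon_AI_existence_uniqueness (s : ℤ → ℝ) (hs : ∀ t, s t = 1 ∨ s t = -1)
    (ε b : ℝ) (hγ : |ε| * (1 + |b|) < 2 * Real.sqrt (1 - 2 / Real.sqrt 5)) :
    let γ := |ε| * (1 + |b|)
    let M := 1 - Real.sqrt (1 - γ * ((γ + Real.sqrt (γ ^ 2 + 4)) / 2))
    (∃! z : ℤ → ℝ, (∀ t, |z t - s t| ≤ M) ∧
        ∀ t : ℤ, -ε * (z (t + 1) + b * z (t - 1)) + (z t) ^ 2 - 1 = 0) ∧
    (∀ z : ℤ → ℝ, (∀ t, |z t - s t| ≤ M) →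
      (∀ t : ℤ, -ε * (z (t + 1) + b * z (t - 1)) + (z t) ^ 2 - 1 = 0) →
      ∀ t, Real.sign (z t) = s t) := by
  intro γ M
  set β := (γ + √(γ ^ 2 + 4)) / 2
  set c := √(1 - γ * β)
  have hγ0 : 0 ≤ γ := by positivity
  have hβ0 : 0 ≤ β := by positivity
  have hβ : β ^ 2 = 1 + γ * β := by
    linear_combination Real.sq_sqrt (by positivity : 0 ≤ γ ^ 2 + 4) / 4
  have h5 := Henon.five_mul_sq_lt_four hβ0 hβ hγ0 hγ
  have hp : γ * β < 1 := by nlinarith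
  have hc : 0 < c := Real.sqrt_pos.2 (by linarith)
  have hc2 : c ^ 2 = 1 - γ * β := Real.sq_sqrt (by linarith)
  have hball : ∀ (z : ℤ → ℝ) t, |z t - s t| ≤ M ↔ s t * z t ∈ Icc c (2 - c) :=
    fun z t => abs_sub_le_one_sub_iff_mul_mem_Icc (hs t)
  obtain ⟨y, hy_mem, hy⟩ := Henon.exists_isOrbit_mem_tube (ε := ε) (b := b)
    (s := .ofNormedAddCommGroupDiscrete s 1 fun t => by rcases hs t with h | h <;> simp [h])
    hs hc hβ0 hc2.le hβ.ge (Henon.lt_two_mul_sqrt_one_sub hβ0 hβ hγ0 h5)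
  have hy_ball : ∀ t, |y t - s t| ≤ M := fun t => (hball y t).2
    ⟨(hy_mem t).1, (hy_mem t).2.trans (Henon.le_two_sub_sqrt_one_sub hβ0 hβ hp.le)⟩
  refine ⟨⟨y, ⟨hy_ball, hy⟩, fun z ⟨hz, hz_orbit⟩ => ?_⟩, fun z hz _ t =>
    Real.sign_eq_of_pos_mul (hs t) (hc.trans_le ((hball z t).1 (hz t)).1)⟩
  have hz_le : ∀ t, ‖z t‖ ≤ 2 := fun t => by
    rcases hs t with h | h <;> have := abs_le.1 (hz t) <;> rw [h] at this <;>
      exact abs_le.2 ⟨by linarith, by linarith⟩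
  exact congrArg (⇑) (Henon.eq_of_isOrbit hs hc (Henon.lt_two_mul_sqrt_one_sub hβ0 hβ hγ0 h5)
    (z := .ofNormedAddCommGroupDiscrete z 2 hz_le) hz_orbit hy
    (fun t => ((hball z t).1 (hz t)).1) fun t => (hy_mem t).1)
end

section
/- Let z* ∈ ℝⁿ (or ℓ∞) with ‖z*‖∞ ≥ 1 − M, and consider the system dζ_i/dτ = Σ_j A_{ij} ζ_j − s_i ζ_i², where A is as in the linearized Biham–Wenzel flow with s_i z*_i = |z*_i| ≥ 1 − M and off-diagonal ℓ∞ row sums at most γ. Then along solutions, the function ‖ζ(τ)‖∞ satisfies the differential inequality d/dτ ‖ζ‖∞ ≤ (−2(1−M) + γ + ‖ζ‖∞)·‖ζ‖∞, so the ball {ζ : ‖ζ‖∞ < 2(1−M) − γ} is contained in the basin of attraction of ζ = 0 whenever 2(1−M) − γ > 0. -/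
/-!
Write `F` for the vector field, so that `ζ(τ + h) = ζ τ + h • F (ζ τ) + o(h)`. The upper Dini
derivative of `‖ζ‖∞` is then bounded by any `R` with `‖v + h • F v‖∞ ≤ ‖v‖∞ + h R` for small
`h > 0`, i.e. by one explicit Euler step. Coordinatewise, the diagonal entry `-2 |z*_i|` shrinks
`|v_i|` by the factor `1 - 2h|z*_i| ≤ 1 - 2h(1 - M)`, while the neighbour coupling and the
quadratic term add at most `h (γ ‖v‖ + ‖v‖²)`.

For the basin, put `c = 2(1 - M) - γ` and compare `‖ζ‖` with a barrier `K e^{-μτ}`, where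
`‖ζ 0‖ ≤ K < c` and `0 ≤ μ < c - K`: at a first contact point `‖ζ‖ ≤ K`, so the Dini bound
`(‖ζ‖ - c) ‖ζ‖ < -μ ‖ζ‖` is below the slope of the barrier and `‖ζ‖` cannot cross it.
-/

open Filter Set Topology

section NormSlope

variable {E : Type*} [NormedAddCommGroup E] [NormedSpace ℝ E] {f : ℝ → E} {D : E} {τ : ℝ}

theorem HasDerivWithinAt.tendsto_slope_zero_right (hf : HasDerivWithinAt f D (Ioi τ) τ) :
    Tendsto (fun h : ℝ => h⁻¹ • (f (τ + h) - f τ)) (𝓝[>] 0) (𝓝 D) := by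
  have hshift : Tendsto (τ + ·) (𝓝[>] (0 : ℝ)) (𝓝[>] τ) :=
    map_add_left_nhdsGT.trans_le (by rw [add_zero])
  refine (((hasDerivWithinAt_iff_tendsto_slope' (lt_irrefl τ)).1 hf).comp hshift).congr ?_
  intro h
  simp only [Function.comp_apply, slope_def_module, add_sub_cancel_left]

theorem HasDerivWithinAt.eventually_slope_norm_lt_of_norm_add_smul_le
    (hf : HasDerivWithinAt f D (Ioi τ) τ) {R r : ℝ}
    (hR : ∀ᶠ h in 𝓝[>] 0, ‖f τ + h • D‖ ≤ ‖f τ‖ + h * R) (hr : R < r) :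
    ∀ᶠ h in 𝓝[>] 0, (‖f (τ + h)‖ - ‖f τ‖) / h < r := by
  have hclose : ∀ᶠ h in 𝓝[>] 0, ‖h⁻¹ • (f (τ + h) - f τ) - D‖ < r - R := by
    simpa only [dist_eq_norm] using
      Metric.tendsto_nhds.1 hf.tendsto_slope_zero_right (r - R) (sub_pos.2 hr)
  filter_upwards [hR, hclose, self_mem_nhdsWithin] with h hRh hch (hpos : 0 < h)
  have hsplit : f (τ + h) = (f τ + h • D) + h • (h⁻¹ • (f (τ + h) - f τ) - D) := by
    rw [smul_sub, smul_inv_smul₀ hpos.ne']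
    abel
  have hnorm : ‖f (τ + h)‖ ≤ ‖f τ + h • D‖ + h * ‖h⁻¹ • (f (τ + h) - f τ) - D‖ := by
    conv_lhs => rw [hsplit]
    refine (norm_add_le _ _).trans_eq ?_
    rw [norm_smul, Real.norm_of_nonneg hpos.le]
  rw [div_lt_iff₀ hpos]
  nlinarith

theorem HasDerivWithinAt.isCoboundedUnder_slope_norm (hf : HasDerivWithinAt f D (Ioi τ) τ) :
    IsCoboundedUnder (· ≤ ·) (𝓝[>] 0) fun h => (‖f (τ + h)‖ - ‖f τ‖) / h := by
  refine isCoboundedUnder_le_of_eventually_le _ (x := -(‖D‖ + 1)) ?_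
  filter_upwards [hf.tendsto_slope_zero_right.norm.eventually_lt_const (lt_add_one ‖D‖),
    self_mem_nhdsWithin] with h hh (hpos : 0 < h)
  rw [norm_smul, norm_inv, Real.norm_of_nonneg hpos.le, inv_mul_lt_iff₀ hpos] at hh
  rw [le_div_iff₀ hpos]
  linarith [neg_abs_le (‖f (τ + h)‖ - ‖f τ‖), abs_norm_sub_norm_le (f (τ + h)) (f τ)]

theorem HasDerivWithinAt.limsup_slope_norm_le_of_norm_add_smul_le
    (hf : HasDerivWithinAt f D (Ioi τ) τ) {R : ℝ}
    (hR : ∀ᶠ h in 𝓝[>] 0, ‖f τ + h • D‖ ≤ ‖f τ‖ + h * R) :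
    limsup (fun h => (‖f (τ + h)‖ - ‖f τ‖) / h) (𝓝[>] 0) ≤ R :=
  le_of_forall_gt_imp_ge_of_dense fun _ hr =>
    limsup_le_of_le hf.isCoboundedUnder_slope_norm
      ((hf.eventually_slope_norm_lt_of_norm_add_smul_le hR hr).mono fun _ => le_of_lt)

end NormSlope

theorem frequently_slope_lt_of_eventually {g : ℝ → ℝ} {x r : ℝ}
    (hg : ∀ᶠ h in 𝓝[>] 0, (g (x + h) - g x) / h < r) : ∃ᶠ z in 𝓝[>] x, slope g x z < r := by
  rw [← add_zero x, ← map_add_left_nhdsGT, frequently_map, add_zero]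
  exact hg.frequently.mono fun h hh => by rwa [slope_def_field, add_sub_cancel_left]

theorem le_mul_exp_of_frequently_slope_lt {g : ℝ → ℝ} {c K μ : ℝ}
    (hg : ContinuousOn g (Ici 0))
    (hslope : ∀ x ∈ Ici (0 : ℝ), ∀ r, (g x - c) * g x < r → ∃ᶠ z in 𝓝[>] x, slope g x z < r)
    (hK : 0 < K) (hgK : g 0 ≤ K) (hμ : 0 ≤ μ) (hμK : μ < c - K) :
    ∀ t ∈ Ici (0 : ℝ), g t ≤ K * Real.exp (-μ * t) := by
  have hB : ∀ x,
      HasDerivAt (fun t => K * Real.exp (-μ * t)) (-μ * (K * Real.exp (-μ * x))) x := fun x =>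
    (((hasDerivAt_id' x).const_mul (-μ)).exp.const_mul K).congr_deriv (by ring)
  intro t ht
  refine image_le_of_liminf_slope_right_lt_deriv_boundary (hg.mono Icc_subset_Ici_self)
    (fun x hx => hslope x hx.1) (by simpa using hgK) hB ?_ ⟨ht, le_rfl⟩
  intro x hx hgx
  have hexp : Real.exp (-μ * x) ≤ 1 := Real.exp_le_one_iff.2 (by nlinarith [hx.1])
  have hpos : 0 < g x := hgx ▸ by positivity
  have hle : g x ≤ K := hgx ▸ mul_le_of_le_one_right hK.le hexp
  rw [← hgx]
  nlinarith

theorem tendsto_zero_of_frequently_slope_lt {g : ℝ → ℝ} {c : ℝ}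
    (hg : ContinuousOn g (Ici 0)) (hg_nonneg : ∀ t, 0 ≤ g t)
    (hslope : ∀ x ∈ Ici (0 : ℝ), ∀ r, (g x - c) * g x < r → ∃ᶠ z in 𝓝[>] x, slope g x z < r)
    (h0 : g 0 < c) : Tendsto g atTop (𝓝 0) := by
  set K := (g 0 + c) / 2 with hK_def
  set μ := (c - K) / 2 with hμ_def
  have hK : 0 < K := by linarith [hg_nonneg 0]
  have hμ : 0 < μ := by linarith
  have hdecay : Tendsto (fun t => K * Real.exp (-μ * t)) atTop (𝓝 0) := by
    simpa using (Real.tendsto_exp_atBot.comp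
      (tendsto_id.const_mul_atTop_of_neg (neg_lt_zero.2 hμ))).const_mul K
  refine squeeze_zero' (Eventually.of_forall hg_nonneg) ?_ hdecay
  filter_upwards [eventually_ge_atTop 0] with t ht
  exact le_mul_exp_of_frequently_slope_lt hg hslope hK (by linarith) hμ.le (by linarith) t ht

theorem abs_euler_step_le {ε b M σ a x y w N h : ℝ} (hσ : |σ| = 1) (ha : 1 - M ≤ a)
    (hh : 0 < h) (hha : 2 * h * a ≤ 1) (hx : |x| ≤ N) (hy : |y| ≤ N) (hw : |w| ≤ N) :
    |x + h * (σ * (ε * (y + b * w)) - 2 * a * x - σ * x ^ 2)| ≤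
      N + h * ((-2 * (1 - M) + |ε| * (1 + |b|) + N) * N) := by
  have hN : 0 ≤ N := (abs_nonneg x).trans hx
  have hcoupling : |ε * (y + b * w) - x ^ 2| ≤ |ε| * (1 + |b|) * N + N ^ 2 := by
    calc |ε * (y + b * w) - x ^ 2| ≤ |ε| * (|y| + |b| * |w|) + |x| ^ 2 := by
          refine (abs_sub _ _).trans (add_le_add ?_ (abs_pow x 2).le)
          rw [abs_mul]
          gcongr
          exact (abs_add_le _ _).trans_eq (by rw [abs_mul])
      _ ≤ |ε| * (N + |b| * N) + N ^ 2 := by gcongr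
      _ = |ε| * (1 + |b|) * N + N ^ 2 := by ring
  calc |x + h * (σ * (ε * (y + b * w)) - 2 * a * x - σ * x ^ 2)|
      = |(1 - 2 * h * a) * x + h * σ * (ε * (y + b * w) - x ^ 2)| := by ring_nf
    _ ≤ (1 - 2 * h * a) * |x| + h * |ε * (y + b * w) - x ^ 2| := by
      refine (abs_add_le _ _).trans_eq ?_
      rw [abs_mul, abs_mul, abs_mul, hσ, abs_of_nonneg (by linarith), abs_of_pos hh, mul_one]
    _ ≤ (1 - 2 * h * a) * N + h * (|ε| * (1 + |b|) * N + N ^ 2) := by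
      gcongr
    _ ≤ (1 - 2 * h * (1 - M)) * N + h * (|ε| * (1 + |b|) * N + N ^ 2) := by
      gcongr
    _ = N + h * ((-2 * (1 - M) + |ε| * (1 + |b|) + N) * N) := by ring

theorem biham_wenzel_row_sum {n : ℕ} [NeZero n] {ε b : ℝ} {s zstar : Fin n → ℝ}
    (hsz : ∀ i, s i * zstar i = |zstar i|) {A : Matrix (Fin n) (Fin n) ℝ}
    (hA : ∀ i j, A i j = s i * (ε * ((if j = i + 1 then 1 else 0) +
        b * (if j = i - 1 then 1 else 0)) - 2 * zstar j * (if i = j then 1 else 0)))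
    (v : Fin n → ℝ) (i : Fin n) :
    ∑ j, A i j * v j = s i * (ε * (v (i + 1) + b * v (i - 1))) - 2 * |zstar i| * v i := by
  simp only [hA, mul_add, add_mul, sub_mul, mul_sub, Finset.sum_add_distrib,
    Finset.sum_sub_distrib, ite_mul, mul_ite, mul_one, mul_zero, zero_mul, Finset.sum_ite_eq',
    Finset.sum_ite_eq, Finset.mem_univ, if_true]
  rw [← hsz i]
  ring

theorem biham_wenzel_euler_step {n : ℕ} [NeZero n] {ε b M : ℝ} {s zstar : Fin n → ℝ}
    (hs : ∀ i, s i = 1 ∨ s i = -1) (hsz : ∀ i, s i * zstar i = |zstar i|)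
    (hz : ∀ i, 1 - M ≤ |zstar i|) {A : Matrix (Fin n) (Fin n) ℝ}
    (hA : ∀ i j, A i j = s i * (ε * ((if j = i + 1 then 1 else 0) +
        b * (if j = i - 1 then 1 else 0)) - 2 * zstar j * (if i = j then 1 else 0)))
    (v : Fin n → ℝ) :
    ∀ᶠ h in 𝓝[>] 0, ‖v + h • fun i => (∑ j, A i j * v j) - s i * v i ^ 2‖ ≤
      ‖v‖ + h * ((-2 * (1 - M) + |ε| * (1 + |b|) + ‖v‖) * ‖v‖) := by
  have hsmall : ∀ᶠ h in 𝓝[>] (0 : ℝ), ∀ i, 2 * h * |zstar i| < 1 := by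
    refine eventually_all.2 fun i => (Tendsto.eventually_lt_const one_pos ?_)
    exact tendsto_nhdsWithin_of_tendsto_nhds (Continuous.tendsto' (by fun_prop) _ _ (by simp))
  filter_upwards [hsmall, self_mem_nhdsWithin] with h hsmall (hpos : 0 < h)
  have hcoord : ∀ i, |(v + h • fun i => (∑ j, A i j * v j) - s i * v i ^ 2) i| ≤
      ‖v‖ + h * ((-2 * (1 - M) + |ε| * (1 + |b|) + ‖v‖) * ‖v‖) := fun i => by
    have habs : ∀ k, |v k| ≤ ‖v‖ := fun k => by simpa using norm_le_pi_norm v k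
    simp only [Pi.add_apply, Pi.smul_apply, smul_eq_mul, biham_wenzel_row_sum hsz hA]
    exact abs_euler_step_le (by rcases hs i with hsi | hsi <;> simp [hsi]) (hz i) hpos
      (hsmall i).le (habs i) (habs _) (habs _)
  exact (pi_norm_le_iff_of_nonneg ((abs_nonneg _).trans (hcoord 0))).2 fun i =>
    (Real.norm_eq_abs _).trans_le (hcoord i)

theorem biham_wenzel_basin_general (n : ℕ) [NeZero n] (ε b M : ℝ)
    (s zstar : Fin n → ℝ) (hs : ∀ i, s i = 1 ∨ s i = -1)
    (hsz : ∀ i, s i * zstar i = |zstar i|) (hz : ∀ i, 1 - M ≤ |zstar i|)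
    (A : Matrix (Fin n) (Fin n) ℝ)
    (hA : ∀ i j, A i j = s i * (ε * ((if j = i + 1 then 1 else 0) +
        b * (if j = i - 1 then 1 else 0)) - 2 * zstar j * (if i = j then 1 else 0)))
    (ζ : ℝ → (Fin n → ℝ))
    (hζ : ∀ τ ∈ Set.Ici (0 : ℝ), ∀ i,
      HasDerivWithinAt (fun τ' => ζ τ' i)
        ((∑ j, A i j * ζ τ j) - s i * (ζ τ i) ^ 2) (Set.Ici (0 : ℝ)) τ) :
    (∀ τ ∈ Set.Ici (0 : ℝ),
      Filter.limsup (fun h : ℝ => (‖ζ (τ + h)‖ - ‖ζ τ‖) / h)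
          (nhdsWithin 0 (Set.Ioi 0)) ≤
        (-2 * (1 - M) + |ε| * (1 + |b|) + ‖ζ τ‖) * ‖ζ τ‖) ∧
    (0 < 2 * (1 - M) - |ε| * (1 + |b|) →
      ‖ζ 0‖ < 2 * (1 - M) - |ε| * (1 + |b|) →
      Filter.Tendsto ζ Filter.atTop (nhds 0)) := by
  have hderiv : ∀ τ ∈ Ici (0 : ℝ),
      HasDerivWithinAt ζ (fun i => (∑ j, A i j * ζ τ j) - s i * ζ τ i ^ 2) (Ioi τ) τ :=
    fun τ hτ => (hasDerivWithinAt_pi.2 (hζ τ hτ)).mono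
      (Ioi_subset_Ici_self.trans (Ici_subset_Ici.2 hτ))
  have heuler := fun τ => biham_wenzel_euler_step hs hsz hz hA (ζ τ)
  refine ⟨fun τ hτ => (hderiv τ hτ).limsup_slope_norm_le_of_norm_add_smul_le (heuler τ),
    fun _ h0 => ?_⟩
  have hcont : ContinuousOn ζ (Ici 0) := fun τ hτ =>
    continuousWithinAt_pi.2 fun i => (hζ τ hτ i).continuousWithinAt
  rw [tendsto_zero_iff_norm_tendsto_zero]
  refine tendsto_zero_of_frequently_slope_lt hcont.norm (fun _ => norm_nonneg _) ?_ h0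
  intro x hx r hr
  refine frequently_slope_lt_of_eventually
    ((hderiv x hx).eventually_slope_norm_lt_of_norm_add_smul_le (heuler x) ?_)
  convert hr using 1
  ring

open Filter in
/-- For the deviation system `ζ' = Aζ − s ζ²` about a Hénon orbit `z*` with
`s i z*_i = |z*_i| ≥ 1 − M` and off-diagonal row sums of `A` bounded by
`γ = |ε|(1+|b|)`, the sup norm of a solution satisfies the Dini differential
inequality `D⁺‖ζ‖∞ ≤ (−2(1−M) + γ + ‖ζ‖∞)‖ζ‖∞`, and when `2(1−M) − γ > 0` the
ball `{ζ : ‖ζ‖∞ < 2(1−M) − γ}` lies in the basin of attraction of `0`. -/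
theorem biham_wenzel_basin (n : ℕ) [NeZero n] (ε b M : ℝ) (hM : M < 1)
    (s zstar : Fin n → ℝ) (hs : ∀ i, s i = 1 ∨ s i = -1)
    (hsz : ∀ i, s i * zstar i = |zstar i|) (hz : ∀ i, 1 - M ≤ |zstar i|)
    (A : Matrix (Fin n) (Fin n) ℝ)
    (hA : ∀ i j, A i j = s i * (ε * ((if j = i + 1 then 1 else 0) +
        b * (if j = i - 1 then 1 else 0)) - 2 * zstar j * (if i = j then 1 else 0)))
    (ζ : ℝ → (Fin n → ℝ))
    (hζ : ∀ τ ∈ Set.Ici (0 : ℝ), ∀ i,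
      HasDerivWithinAt (fun τ' => ζ τ' i)
        ((∑ j, A i j * ζ τ j) - s i * (ζ τ i) ^ 2) (Set.Ici (0 : ℝ)) τ) :
    (∀ τ ∈ Set.Ici (0 : ℝ),
      Filter.limsup (fun h : ℝ => (‖ζ (τ + h)‖ - ‖ζ τ‖) / h)
          (nhdsWithin 0 (Set.Ioi 0)) ≤
        (-2 * (1 - M) + |ε| * (1 + |b|) + ‖ζ τ‖) * ‖ζ τ‖) ∧
    (0 < 2 * (1 - M) - |ε| * (1 + |b|) →
      ‖ζ 0‖ < 2 * (1 - M) - |ε| * (1 + |b|) →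
      Filter.Tendsto ζ Filter.atTop (nhds 0)) :=
  biham_wenzel_basin_general n ε b M s zstar hs hsz hz A hA ζ hζ
end

section
/- The inequality 3·M∞(γ) < 2 − γ, where M∞(γ) = 1 − √(1 − γ(γ + √(γ²+4))/2), holds for all γ with 0 ≤ γ < γ*, where γ* ∈ (0.5556, 0.5557) is the unique positive solution of 3M∞(γ) = 2 − γ; in particular the inequality holds for all 0 ≤ γ ≤ 0.5556. -/
/-!
`M∞ = orbitRadius` is increasing on `[0, ∞)` (its radicand decreases there) while `2 − γ` strictly
decreases, so `3 M∞(γ) − (2 − γ)` is strictly increasing and continuous. A sign change on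
`[0.5556, 0.5557]`, checked by bracketing the square roots with rationals, produces its
unique positive zero `γ*`, and the function is negative exactly to the left of it.
-/

open Set

noncomputable def orbitRadius (γ : ℝ) : ℝ :=
  1 - √(1 - γ * ((γ + √(γ ^ 2 + 4)) / 2))

noncomputable def basinGap (γ : ℝ) : ℝ :=
  3 * orbitRadius γ - (2 - γ)

lemma orbitRadius_monotoneOn : MonotoneOn orbitRadius (Ici 0) := by
  intro x hx y hy hxy
  have hsqrt : √(x ^ 2 + 4) ≤ √(y ^ 2 + 4) :=
    Real.sqrt_le_sqrt (by nlinarith [mem_Ici.1 hx])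
  have hprod : x * ((x + √(x ^ 2 + 4)) / 2) ≤ y * ((y + √(y ^ 2 + 4)) / 2) := by
    nlinarith [mem_Ici.1 hx, Real.sqrt_nonneg (x ^ 2 + 4)]
  have := Real.sqrt_le_sqrt (sub_le_sub_left hprod 1)
  unfold orbitRadius
  linarith

lemma basinGap_strictMonoOn : StrictMonoOn basinGap (Ici 0) := fun x hx y hy hxy => by
  have := orbitRadius_monotoneOn hx hy hxy.le
  unfold basinGap
  linarith

lemma continuous_basinGap : Continuous basinGap := by
  unfold basinGap orbitRadius
  fun_prop

lemma basinGap_lt_zero_at_0_5556 : basinGap 0.5556 < 0 := by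
  have hinner : √((0.5556 : ℝ) ^ 2 + 4) < 2.0758 := by
    rw [Real.sqrt_lt' (by norm_num)]; norm_num
  have houter :
      (1 + 0.5556 : ℝ) / 3 < √(1 - 0.5556 * ((0.5556 + √((0.5556 : ℝ) ^ 2 + 4)) / 2)) := by
    rw [Real.lt_sqrt (by norm_num)]; nlinarith
  unfold basinGap orbitRadius
  linarith

lemma basinGap_pos_at_0_5557 : 0 < basinGap 0.5557 := by
  have hinner : (2.0757 : ℝ) < √((0.5557 : ℝ) ^ 2 + 4) := by
    rw [Real.lt_sqrt (by norm_num)]; norm_num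
  have houter :
      √(1 - 0.5557 * ((0.5557 + √((0.5557 : ℝ) ^ 2 + 4)) / 2)) < (1 + 0.5557 : ℝ) / 3 := by
    rw [Real.sqrt_lt' (by norm_num)]; nlinarith
  unfold basinGap orbitRadius
  linarith

/-- The inequality `3 M∞(γ) < 2 − γ`, with `M∞(γ) = 1 − √(1 − γ(γ+√(γ²+4))/2)`,
holds for all `0 ≤ γ < γ*`, where `γ* ∈ (0.5556, 0.5557)` is the unique positive
solution of `3 M∞(γ) = 2 − γ`; in particular it holds for all `0 ≤ γ ≤ 0.5556`. -/
theorem basin_inclusion_bound :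
    let M : ℝ → ℝ :=
      fun γ => 1 - Real.sqrt (1 - γ * ((γ + Real.sqrt (γ ^ 2 + 4)) / 2))
    ∃ γstar : ℝ, γstar ∈ Set.Ioo (0.5556 : ℝ) 0.5557 ∧
      (∀ γ : ℝ, 0 < γ → (3 * M γ = 2 - γ ↔ γ = γstar)) ∧
      (∀ γ : ℝ, 0 ≤ γ → γ < γstar → 3 * M γ < 2 - γ) ∧
      (∀ γ : ℝ, 0 ≤ γ → γ ≤ 0.5556 → 3 * M γ < 2 - γ) := by
  intro M
  have hgap (γ : ℝ) : basinGap γ = 3 * M γ - (2 - γ) := rfl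
  obtain ⟨γstar, hmem, hzero⟩ :=
    intermediate_value_Ioo (by norm_num) continuous_basinGap.continuousOn
      ⟨basinGap_lt_zero_at_0_5556, basinGap_pos_at_0_5557⟩
  have hstar : γstar ∈ Ici 0 := mem_Ici.2 (by linarith [hmem.1])
  have below (γ : ℝ) (hγ : 0 ≤ γ) (hlt : γ < γstar) : 3 * M γ < 2 - γ := by
    have := basinGap_strictMonoOn hγ hstar hlt
    linarith [hgap γ]
  refine ⟨γstar, hmem, fun γ hγ => ?_, below,
    fun γ hγ hle => below γ hγ (hle.trans_lt hmem.1)⟩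
  rw [← basinGap_strictMonoOn.eq_iff_eq (mem_Ici.2 hγ.le) hstar, hzero, hgap, sub_eq_zero]
end

section
/- Let s : ℤ → {±1}, and suppose z, w ∈ ℓ∞(ℤ) satisfy ‖z − s‖∞ ≤ M and ‖w − s‖∞ ≤ M with the radicands 1 + ε(z_{t+1} + b z_{t−1}) ≥ α² > 0 and similarly for w. Then ‖T(z) − T(w)‖∞ ≤ (γ/(2α))·‖z − w‖∞, where γ = |ε|(1+|b|) and T(z)_t = s_t√(1 + ε(z_{t+1} + b z_{t−1})). In particular T is a contraction when γ < 2α. -/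
theorem Real.abs_sqrt_sub_sqrt_le_of_sq_le {α a c : ℝ} (hα : 0 < α) (ha : α ^ 2 ≤ a)
    (hc : α ^ 2 ≤ c) : |√a - √c| ≤ |a - c| / (2 * α) := by
  have hαa : α ≤ √a := Real.le_sqrt_of_sq_le ha
  have hαc : α ≤ √c := Real.le_sqrt_of_sq_le hc
  have h_factor : a - c = (√a + √c) * (√a - √c) := by
    rw [← sq_sub_sq, Real.sq_sqrt ((sq_nonneg α).trans ha), Real.sq_sqrt ((sq_nonneg α).trans hc)]
  rw [le_div_iff₀ (by positivity), h_factor, abs_mul, abs_of_pos (by linarith : 0 < √a + √c),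
    mul_comm]
  gcongr
  linarith

theorem abs_one_add_mul_sub_one_add_mul_le {ε b x₁ x₂ y₁ y₂ C : ℝ} (h₁ : |x₁ - y₁| ≤ C)
    (h₂ : |x₂ - y₂| ≤ C) :
    |(1 + ε * (x₁ + b * x₂)) - (1 + ε * (y₁ + b * y₂))| ≤ |ε| * (1 + |b|) * C :=
  calc |(1 + ε * (x₁ + b * x₂)) - (1 + ε * (y₁ + b * y₂))|
      = |ε| * |(x₁ - y₁) + b * (x₂ - y₂)| := by rw [← abs_mul]; ring_nf
    _ ≤ |ε| * (|x₁ - y₁| + |b| * |x₂ - y₂|) := by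
        gcongr
        exact (abs_add_le _ _).trans_eq (by rw [abs_mul])
    _ ≤ |ε| * (C + |b| * C) := by gcongr
    _ = |ε| * (1 + |b|) * C := by ring

theorem AI_operator_lipschitz_general (s : ℤ → ℝ) (hs : ∀ t, s t = 1 ∨ s t = -1)
    (ε b α : ℝ) (hα : 0 < α) (z w : ℤ → ℝ)
    (hrz : ∀ t : ℤ, α ^ 2 ≤ 1 + ε * (z (t + 1) + b * z (t - 1)))
    (hrw : ∀ t : ℤ, α ^ 2 ≤ 1 + ε * (w (t + 1) + b * w (t - 1)))
    (C : ℝ) (hC : ∀ t, |z t - w t| ≤ C) :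
    ∀ t : ℤ,
      |s t * Real.sqrt (1 + ε * (z (t + 1) + b * z (t - 1))) -
        s t * Real.sqrt (1 + ε * (w (t + 1) + b * w (t - 1)))| ≤
      (|ε| * (1 + |b|) / (2 * α)) * C := by
  intro t
  have hs_abs : |s t| = 1 := by rcases hs t with h | h <;> simp [h]
  rw [← mul_sub, abs_mul, hs_abs, one_mul]
  calc _ ≤ |(1 + ε * (z (t + 1) + b * z (t - 1))) - (1 + ε * (w (t + 1) + b * w (t - 1)))|
          / (2 * α) := Real.abs_sqrt_sub_sqrt_le_of_sq_le hα (hrz t) (hrw t)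
    _ ≤ |ε| * (1 + |b|) * C / (2 * α) := by
        gcongr
        exact abs_one_add_mul_sub_one_add_mul_le (hC _) (hC _)
    _ = (|ε| * (1 + |b|) / (2 * α)) * C := by ring

/-- Lipschitz estimate for the anti-integrable operator: if `z, w` lie in the ball
`B_M(s)` and all radicands are at least `α² > 0`, then for any uniform bound `C`
on `|z_t − w_t|` one has `|T(z)_t − T(w)_t| ≤ (γ/(2α)) C` with `γ = |ε|(1+|b|)`;
in particular `T` is a contraction when `γ < 2α`. -/
theorem AI_operator_lipschitz (s : ℤ → ℝ) (hs : ∀ t, s t = 1 ∨ s t = -1)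
    (ε b M α : ℝ) (hα : 0 < α) (z w : ℤ → ℝ)
    (hz : ∀ t, |z t - s t| ≤ M) (hw : ∀ t, |w t - s t| ≤ M)
    (hrz : ∀ t : ℤ, α ^ 2 ≤ 1 + ε * (z (t + 1) + b * z (t - 1)))
    (hrw : ∀ t : ℤ, α ^ 2 ≤ 1 + ε * (w (t + 1) + b * w (t - 1)))
    (C : ℝ) (hC : ∀ t, |z t - w t| ≤ C) :
    ∀ t : ℤ,
      |s t * Real.sqrt (1 + ε * (z (t + 1) + b * z (t - 1))) -
        s t * Real.sqrt (1 + ε * (w (t + 1) + b * w (t - 1)))| ≤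
      (|ε| * (1 + |b|) / (2 * α)) * C :=
  AI_operator_lipschitz_general s hs ε b α hα z w hrz hrw C hC
end
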